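/- Let G be a finite simple graph with exactly one full vertex and with minimum degree δ(G) = 1, and suppose the coalition number C(G) equals s with s ≥ 2. Then for every c-partition π of G of order s, the coalition graph CG(G, π) is isomorphic to the disjoint union K_1 ∪ K_{1, s−2} of an isolated vertex and a star with s − 2 leaves. -/

import Mathlib

open scoped Classical

/-- A dominating set (as a finset): every vertex outside `S` has a neighbor in `S`. -/
def IsDomSet {V : Type*} (G : SimpleGraph V) (S : Finset V) : Prop :=
  ∀ v, v ∉ S → ∃ u ∈ S, G.Adj u v

/-- Two (distinct) sets form a coalition: neither dominates, but their union does. -/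
def IsCoalition {V : Type*} (G : SimpleGraph V) (A B : Finset V) : Prop :=
  A ≠ B ∧ ¬ IsDomSet G A ∧ ¬ IsDomSet G B ∧ IsDomSet G (A ∪ B)

/-- A coalition partition (c-partition) of the vertex set of `G`. -/
def IsCPartition {V : Type*} [Fintype V] (G : SimpleGraph V) (π : Finset (Finset V)) : Prop :=
  (∀ A ∈ π, A.Nonempty) ∧
  (∀ A ∈ π, ∀ B ∈ π, A ≠ B → Disjoint A B) ∧
  (∀ v : V, ∃ A ∈ π, v ∈ A) ∧
  (∀ A ∈ π, (∃ v, A = {v} ∧ IsDomSet G A) ∨ ∃ B ∈ π, IsCoalition G A B)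

/-- Number of distinct (unordered) coalitions in the partition `π`. -/
noncomputable def cpCount {V : Type*} [Fintype V] (G : SimpleGraph V)
    (π : Finset (Finset V)) : ℕ :=
  ((π ×ˢ π).filter (fun p => IsCoalition G p.1 p.2)).card / 2

/-- The coalition count `c(G)`: maximum number of distinct coalitions over c-partitions. -/
noncomputable def coalitionCount {V : Type*} [Fintype V] (G : SimpleGraph V) : ℕ :=
  sSup {k | ∃ π, IsCPartition G π ∧ k = cpCount G π}

/-- The coalition number `C(G)`: maximum order of a c-partition. -/
noncomputable def coalitionNumber {V : Type*} [Fintype V] (G : SimpleGraph V) : ℕ :=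
  sSup {k | ∃ π, IsCPartition G π ∧ k = π.card}

/-- The coalition graph `CG(G, π)`. -/
def coalitionGraph {V : Type*} (G : SimpleGraph V) (π : Finset (Finset V)) :
    SimpleGraph {A // A ∈ π} where
  Adj A B := IsCoalition G A.1 B.1
  symm := by
    constructor
    rintro A B ⟨h1, h2, h3, h4⟩
    exact ⟨fun h => h1 h.symm, h3, h2, by rwa [Finset.union_comm]⟩
  loopless := by
    constructor
    rintro A ⟨h1, -⟩
    exact h1 rfl

/-- The set of full vertices (vertices of degree `n - 1`). -/
noncomputable def fullVertices {V : Type*} [Fintype V] (G : SimpleGraph V) : Finset V :=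
  Finset.univ.filter (fun v => G.degree v = Fintype.card V - 1)

/-- The domatic number: maximum order of a partition into dominating sets. -/
noncomputable def domaticNumber {V : Type*} [Fintype V] (G : SimpleGraph V) : ℕ :=
  sSup {k | ∃ P : Finset (Finset V),
    (∀ A ∈ P, A.Nonempty) ∧
    (∀ A ∈ P, ∀ B ∈ P, A ≠ B → Disjoint A B) ∧
    (∀ v : V, ∃ A ∈ P, v ∈ A) ∧
    (∀ A ∈ P, IsDomSet G A) ∧ k = P.card}

/-- The independence number of `G`. -/
noncomputable def indepNumber {V : Type*} [Fintype V] (G : SimpleGraph V) : ℕ :=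
  sSup {k | ∃ s : Finset V, (∀ a ∈ s, ∀ b ∈ s, ¬ G.Adj a b) ∧ k = s.card}

/-- The graph `K_1 ∪ K_{1, s-2}` on `Fin s` (for `s ≥ 2`): vertex `0` is isolated, vertex `1`
is the center of a star whose leaves are the vertices `2, …, s-1`. -/
def K1UnionStar (s : ℕ) : SimpleGraph (Fin s) where
  Adj a b := ((a : ℕ) = 1 ∧ 2 ≤ (b : ℕ)) ∨ ((b : ℕ) = 1 ∧ 2 ≤ (a : ℕ))
  symm := by constructor; rintro a b (h | h); exacts [Or.inr h, Or.inl h]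
  loopless := by constructor; rintro a (⟨h1, h2⟩ | ⟨h1, h2⟩) <;> omega

/-
A full vertex `u` lies in a dominating part `A`, and a pendant vertex `w` (whose only neighbour
is `u`, since `u` is the only full vertex) lies in another part `B`. A set meeting neither `u`
nor `w` leaves `w` undominated, so every coalition contains `B`; conversely every part other
than `A` and `B` fails to dominate, hence has a coalition partner, which must be `B`. So `A` is
isolated in the coalition graph and `B` is adjacent to exactly the remaining parts.
-/

open SimpleGraph

lemma exists_equiv_apply_eq_and_apply_eq {α β : Type*} [Fintype α] [Fintype β] [DecidableEq β]
    (h : Fintype.card α = Fintype.card β) {a b : α} {a' b' : β} (hab : a ≠ b)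
    (hab' : a' ≠ b') :
    ∃ e : α ≃ β, e a = a' ∧ e b = b' := by
  let e₁ := (Fintype.equivOfCardEq h).trans (Equiv.swap (Fintype.equivOfCardEq h a) a')
  have he₁ : e₁ a = a' := by simp [e₁]
  refine ⟨e₁.trans (Equiv.swap (e₁ b) b'), ?_, by simp⟩
  have : a' ≠ e₁ b := he₁ ▸ e₁.injective.ne hab
  simp [he₁, Equiv.swap_apply_of_ne_of_ne this hab']

def SimpleGraph.Iso.starGraphDeleteIncidenceSet {V W : Type*} (e : V ≃ W) (a c : V) :
    (starGraph c).deleteIncidenceSet a ≃g (starGraph (e c)).deleteIncidenceSet (e a) :=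
  ⟨e, by simp [deleteIncidenceSet_adj]⟩

lemma K1UnionStar_eq_starGraph_deleteIncidenceSet {s : ℕ} (hs : 2 ≤ s) :
    K1UnionStar s =
      (starGraph (⟨1, by omega⟩ : Fin s)).deleteIncidenceSet ⟨0, by omega⟩ := by
  ext x y
  simp only [K1UnionStar, deleteIncidenceSet_adj, starGraph_adj, ne_eq, Fin.ext_iff]
  omega

lemma nonempty_iso_K1UnionStar {T : Type*} [Fintype T] {a c : T} (hac : a ≠ c) :
    Nonempty ((starGraph c).deleteIncidenceSet a ≃g K1UnionStar (Fintype.card T)) := by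
  have hT : 2 ≤ Fintype.card T := Fintype.one_lt_card_iff.mpr ⟨a, c, hac⟩
  obtain ⟨e, hea, hec⟩ := exists_equiv_apply_eq_and_apply_eq (Fintype.card_fin _).symm hac
    (a' := (⟨0, by omega⟩ : Fin (Fintype.card T))) (b' := ⟨1, by omega⟩) (by simp)
  rw [K1UnionStar_eq_starGraph_deleteIncidenceSet hT, ← hea, ← hec]
  exact ⟨Iso.starGraphDeleteIncidenceSet e a c⟩

section Coalition

variable {V : Type*} {G : SimpleGraph V} {u w : V} {S X Y : Finset V}

lemma IsCoalition.symm (h : IsCoalition G X Y) : IsCoalition G Y X :=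
  ⟨h.1.symm, h.2.2.1, h.2.1, Finset.union_comm X Y ▸ h.2.2.2⟩

lemma isDomSet_of_mem_of_isUniversal (hu : G.IsUniversal u) (huS : u ∈ S) : IsDomSet G S :=
  fun _ hv => ⟨u, huS, hu (ne_of_mem_of_not_mem huS hv)⟩

lemma not_isDomSet_of_notMem (hw : ∀ x, G.Adj w x → x = u) (huS : u ∉ S) (hwS : w ∉ S) :
    ¬ IsDomSet G S := fun hS => by
  obtain ⟨x, hxS, hxw⟩ := hS w hwS
  exact huS (hw x hxw.symm ▸ hxS)

lemma IsCoalition.mem_or_mem (hu : G.IsUniversal u) (hw : ∀ x, G.Adj w x → x = u)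
    (h : IsCoalition G X Y) : w ∈ X ∨ w ∈ Y := by
  have huX : u ∉ X := fun huX => h.2.1 (isDomSet_of_mem_of_isUniversal hu huX)
  have huY : u ∉ Y := fun huY => h.2.2.1 (isDomSet_of_mem_of_isUniversal hu huY)
  by_contra! hwXY
  exact not_isDomSet_of_notMem hw (by simp [huX, huY]) (by simp [hwXY.1, hwXY.2]) h.2.2.2

end Coalition

namespace IsCPartition

variable {V : Type*} [Fintype V] {G : SimpleGraph V} {π : Finset (Finset V)} {u w v : V}
  {A B X Y : Finset V}

lemma eq_of_mem (hπ : IsCPartition G π) (hX : X ∈ π) (hY : Y ∈ π) (hvX : v ∈ X)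
    (hvY : v ∈ Y) : X = Y := by
  by_contra hXY
  exact Finset.disjoint_left.mp (hπ.2.1 X hX Y hY hXY) hvX hvY

lemma ne_of_isUniversal (hπ : IsCPartition G π) (hu : G.IsUniversal u) (huw : u ≠ w)
    (hA : A ∈ π) (huA : u ∈ A) (hB : B ∈ π) (hwB : w ∈ B) : A ≠ B := by
  rintro rfl
  rcases hπ.2.2.2 A hA with ⟨v, rfl, -⟩ | ⟨C, -, hAC⟩
  · exact huw ((Finset.mem_singleton.mp huA).trans (Finset.mem_singleton.mp hwB).symm)
  · exact hAC.2.1 (isDomSet_of_mem_of_isUniversal hu huA)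

lemma eq_or_eq_of_isCoalition (hπ : IsCPartition G π) (hu : G.IsUniversal u)
    (hw : ∀ x, G.Adj w x → x = u) (hB : B ∈ π) (hwB : w ∈ B) (hX : X ∈ π)
    (hY : Y ∈ π) (h : IsCoalition G X Y) : X = B ∨ Y = B :=
  (h.mem_or_mem hu hw).imp (hπ.eq_of_mem hX hB · hwB) (hπ.eq_of_mem hY hB · hwB)

lemma isCoalition_of_ne (hπ : IsCPartition G π) (hu : G.IsUniversal u)
    (hw : ∀ x, G.Adj w x → x = u) (hA : A ∈ π) (huA : u ∈ A) (hB : B ∈ π)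
    (hwB : w ∈ B) (hY : Y ∈ π) (hYA : Y ≠ A) (hYB : Y ≠ B) : IsCoalition G B Y := by
  have hYdom : ¬ IsDomSet G Y := not_isDomSet_of_notMem hw
    (fun huY => hYA (hπ.eq_of_mem hY hA huY huA)) (fun hwY => hYB (hπ.eq_of_mem hY hB hwY hwB))
  rcases hπ.2.2.2 Y hY with ⟨_, -, hdom⟩ | ⟨D, hD, hYD⟩
  · exact absurd hdom hYdom
  · obtain rfl : D = B := (hπ.eq_or_eq_of_isCoalition hu hw hB hwB hY hD hYD).resolve_left hYB
    exact hYD.symm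

lemma coalitionGraph_eq (hπ : IsCPartition G π) (hu : G.IsUniversal u)
    (hw : ∀ x, G.Adj w x → x = u) (hA : A ∈ π) (huA : u ∈ A) (hB : B ∈ π)
    (hwB : w ∈ B) :
    coalitionGraph G π = (starGraph ⟨B, hB⟩).deleteIncidenceSet ⟨A, hA⟩ := by
  have hAdom := isDomSet_of_mem_of_isUniversal hu huA
  ext ⟨X, hX⟩ ⟨Y, hY⟩
  simp only [deleteIncidenceSet_adj, starGraph_adj, ne_eq, Subtype.mk.injEq]
  refine ⟨fun h => ⟨⟨h.1, hπ.eq_or_eq_of_isCoalition hu hw hB hwB hX hY h⟩,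
    fun hXA => h.2.1 (hXA ▸ hAdom), fun hYA => h.2.2.1 (hYA ▸ hAdom)⟩, ?_⟩
  rintro ⟨⟨hXY, rfl | rfl⟩, hXA, hYA⟩
  · exact hπ.isCoalition_of_ne hu hw hA huA hB hwB hY hYA (Ne.symm hXY)
  · exact (hπ.isCoalition_of_ne hu hw hA huA hB hwB hX hXA hXY).symm

end IsCPartition

section FullVertex

variable {V : Type*} [Fintype V] {G : SimpleGraph V} {u v w : V}

lemma mem_fullVertices_iff : v ∈ fullVertices G ↔ G.IsUniversal v := by
  simp [fullVertices, degree_eq_card_sub_one]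

lemma adj_iff_eq_of_degree_eq_one (hfull : fullVertices G = {u}) (hw : G.degree w = 1) :
    ∀ x, G.Adj w x ↔ x = u := by
  have hu : G.IsUniversal u := mem_fullVertices_iff.mp (hfull ▸ Finset.mem_singleton_self u)
  obtain ⟨y, hwy, hy⟩ := degree_eq_one_iff_existsUnique_adj.mp hw
  -- if `w` were the full vertex, its unique neighbour `y` would be full as well
  have huw : u ≠ w := by
    rintro rfl
    have hyu : y ∈ fullVertices G := mem_fullVertices_iff.mpr fun z hyz => by
      rcases eq_or_ne u z with rfl | huz
      · exact hwy.symm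
      · exact absurd (hy z (hu huz)).symm hyz
    rw [hfull, Finset.mem_singleton] at hyu
    exact hwy.ne hyu.symm
  obtain rfl := hy u (hu huw).symm
  exact fun x => ⟨hy x, fun hx => hx ▸ hwy⟩

end FullVertex

theorem stmt_8_general {V : Type} [Fintype V] (G : SimpleGraph V) (s : ℕ)
    (hfull : (fullVertices G).card = 1)
    (hdelta : G.minDegree = 1) :
    ∀ π : Finset (Finset V), IsCPartition G π → π.card = s →
      Nonempty (coalitionGraph G π ≃g K1UnionStar s) := by
  intro π hπ hcard
  obtain ⟨u, hfullu⟩ := Finset.card_eq_one.mp hfull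
  have hu : G.IsUniversal u := mem_fullVertices_iff.mp (hfullu ▸ Finset.mem_singleton_self u)
  have : Nonempty V := ⟨u⟩
  obtain ⟨w, hwdeg⟩ := G.exists_minimal_degree_vertex
  have hw := adj_iff_eq_of_degree_eq_one hfullu (hwdeg ▸ hdelta)
  have huw : u ≠ w := (G.ne_of_adj ((hw u).mpr rfl)).symm
  obtain ⟨A, hA, huA⟩ := hπ.2.2.1 u
  obtain ⟨B, hB, hwB⟩ := hπ.2.2.1 w
  rw [hπ.coalitionGraph_eq hu (hw · |>.mp) hA huA hB hwB, ← hcard, ← Fintype.card_coe]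
  exact nonempty_iso_K1UnionStar
    (Subtype.coe_ne_coe.mp (hπ.ne_of_isUniversal hu huw hA huA hB hwB))

/-- If `G` has exactly one full vertex, `δ(G) = 1`, and `C(G) = s ≥ 2`, then for
every c-partition `π` of `G` of order `s`, `CG(G, π) ≅ K_1 ∪ K_{1, s-2}`. -/
theorem stmt_8 {V : Type} [Fintype V] (G : SimpleGraph V) (s : ℕ)
    (hfull : (fullVertices G).card = 1)
    (hdelta : G.minDegree = 1)
    (hs : 2 ≤ s) (hC : coalitionNumber G = s) :
    ∀ π : Finset (Finset V), IsCPartition G π → π.card = s →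
      Nonempty (coalitionGraph G π ≃g K1UnionStar s) :=
  stmt_8_general G s hfull hdelta
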